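/- If $I \subset [0,1]$ satisfies the DCC, then the set $D(I) = \{ (m - 1 + f)/m \mid m \in \mathbb{Z}_{>0},\ f \in I_+ \}$ satisfies the DCC. -/

import Mathlib

def SatisfiesDCC (S : Set ℝ) : Prop :=
  ¬ ∃ f : ℕ → ℝ, (∀ n, f n ∈ S) ∧ ∀ n, f (n + 1) < f n

def SatisfiesACC (S : Set ℝ) : Prop :=
  ¬ ∃ f : ℕ → ℝ, (∀ n, f n ∈ S) ∧ ∀ n, f n < f (n + 1)

def IPlus (I : Set ℝ) : Set ℝ :=
  {0} ∪ {j | j ∈ Set.Icc (0 : ℝ) 1 ∧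
    ∃ l : List ℝ, l ≠ [] ∧ (∀ x ∈ l, x ∈ I) ∧ l.sum = j}

def DSet (I : Set ℝ) : Set ℝ :=
  {a | ∃ m : ℕ, 0 < m ∧ ∃ f ∈ IPlus I, a = (m - 1 + f) / m}

/-!
`I₊` lies in the additive submonoid generated by `I`, which is well-founded since `I` is a
well-founded set of nonnegative reals. Below any `c < 1`, an element `(m - 1 + f) / m` of `D(I)`
has `m < 1 / (1 - c)`, so that part of `D(I)` is covered by finitely many monotone images
`f ↦ (m - 1 + f) / m` of `I₊`, each well-founded. A descending sequence in `D(I) ⊆ [0, 1]`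
eventually lies below such a `c`.
-/

open Set

theorem Set.IsWF.of_forall_lt_isWF_inter_Iio {α : Type*} [LinearOrder α] {S : Set α} {a : α}
    (hS : ∀ x ∈ S, x ≤ a) (h : ∀ c < a, (S ∩ Iio c).IsWF) : S.IsWF := by
  rw [isWF_iff_no_descending_seq]
  intro f hf hmem
  have hf1 : f 1 < a := (hf zero_lt_one).trans_le (hS _ (hmem 0))
  refine isWF_iff_no_descending_seq.1 (h _ hf1) (fun n => f (n + 2))
    (hf.comp_strictMono (strictMono_id.add_const 2)) fun n => ⟨hmem _, hf (by omega)⟩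

theorem satisfiesDCC_iff_isWF {S : Set ℝ} : SatisfiesDCC S ↔ S.IsWF := by
  rw [isWF_iff_no_descending_seq, SatisfiesDCC]
  constructor
  · rintro h f hf hmem
    exact h ⟨f, hmem, fun n => hf (Nat.lt_succ_self n)⟩
  · rintro h ⟨f, hmem, hf⟩
    exact h f (strictAnti_nat_of_succ_lt hf) hmem

theorem IPlus_subset_Icc (I : Set ℝ) : IPlus I ⊆ Icc 0 1 := by
  rintro x (rfl | ⟨hx, -⟩)
  · exact ⟨le_rfl, zero_le_one⟩
  · exact hx

theorem IPlus_subset_addSubmonoidClosure (I : Set ℝ) : IPlus I ⊆ AddSubmonoid.closure I := by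
  rintro x (rfl | ⟨-, l, -, hl, rfl⟩)
  · exact zero_mem _
  · exact list_sum_mem fun x hx => AddSubmonoid.subset_closure (hl x hx)

theorem isWF_IPlus {I : Set ℝ} (hI : ∀ x ∈ I, 0 ≤ x) (h : I.IsWF) : (IPlus I).IsWF :=
  ((h.isPWO.addSubmonoid_closure hI).mono (IPlus_subset_addSubmonoidClosure I)).isWF

theorem DSet_subset_Iic (I : Set ℝ) : DSet I ⊆ Iic 1 := by
  rintro _ ⟨m, hm, f, hf, rfl⟩
  have hm' : (0 : ℝ) < m := Nat.cast_pos.2 hm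
  rw [mem_Iic, div_le_one hm']
  linarith [(IPlus_subset_Icc I hf).2]

theorem DSet_inter_Iio_subset {I : Set ℝ} {c : ℝ} (hc : c < 1) :
    DSet I ∩ Iio c ⊆
      ⋃ m ∈ Finset.range ⌈1 / (1 - c)⌉₊, (fun f : ℝ => (m - 1 + f) / m) '' IPlus I := by
  rintro _ ⟨⟨m, hm, f, hf, rfl⟩, hlt⟩
  have hm' : (0 : ℝ) < m := Nat.cast_pos.2 hm
  have hf0 : 0 ≤ f := (IPlus_subset_Icc I hf).1
  have hmc : m * (1 - c) < 1 := by
    rw [mem_Iio, div_lt_iff₀ hm'] at hlt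
    linarith
  have hmB : m < ⌈1 / (1 - c)⌉₊ := by
    rw [Nat.lt_ceil, lt_div_iff₀ (sub_pos.2 hc)]
    exact hmc
  exact mem_biUnion (Finset.mem_coe.2 (Finset.mem_range.2 hmB)) ⟨f, hf, rfl⟩

theorem isWF_DSet {I : Set ℝ} (hI : ∀ x ∈ I, 0 ≤ x) (h : I.IsWF) : (DSet I).IsWF := by
  refine IsWF.of_forall_lt_isWF_inter_Iio (DSet_subset_Iic I) fun c hc => ?_
  refine IsWF.mono ?_ (DSet_inter_Iio_subset hc)
  rw [← Finset.sup_set_eq_biUnion, Finset.isWF_sup]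
  intro m _
  exact ((isWF_IPlus hI h).isPWO.image_of_monotone fun x y hxy => by gcongr).isWF

theorem dcc_DSet (I : Set ℝ) (hI : I ⊆ Set.Icc 0 1)
    (hdcc : SatisfiesDCC I) : SatisfiesDCC (DSet I) :=
  satisfiesDCC_iff_isWF.2 <| isWF_DSet (fun _ hx => (hI hx).1) (satisfiesDCC_iff_isWF.1 hdcc)
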